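/- Let E ⊂ ℝ² be finite, let k ≥ 1 be an integer, and let C_nice ≥ 1 and c_rep > 0 be given. Let Q be a dyadic square with side length δ_Q ≤ 1, and let x^♯ ∈ Q satisfy dist(x^♯, E) ≥ c_rep·δ_Q. Suppose that either δ_Q = 1, or there exists ŷ ∈ E ∩ (Q⁺)* with diam(σ^♯(ŷ, k)) < 2·C_nice·δ_Q. Then σ^♯(x^♯, 4k) ⊂ C·ℬ(x^♯, δ_Q) for a constant C depending only on C_nice and c_rep, where C·ℬ(x^♯, δ_Q) = {P ∈ 𝒫 : |∂^α P(x^♯)| ≤ C·δ_Q^{2−|α|} for |α| ≤ 1}. -/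

import Mathlib

/-!
Helly's theorem in the plane of differentials at `ŷ` turns the `4k`-point condition at `x♯` into a
single jet `P' ∈ σ♯(ŷ, k)` with `P'(ŷ) = 0` and `‖∇P' − ∇P(x♯)‖ ≤ 4|ŷ − x♯|`: for any three of
the `k`-point sets, a `C²` witness of `P` vanishing on their union and on `ŷ` gives a common point.
As `0 ∈ σ♯(ŷ, k)`, the diameter hypothesis bounds `∇P'`, so `∇P(x♯) = O(δ_Q)` because
`|ŷ − x♯| ≤ 8δ_Q`; Taylor's formula for a witness of `P` vanishing at `ŷ` then gives
`|P(x♯)| = O(δ_Q²)`. When `δ_Q = 1` the `C²` bound alone suffices.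
-/

noncomputable section

/-- The plane `ℝ²` with the Euclidean metric. -/
abbrev V2 : Type := EuclideanSpace ℝ (Fin 2)

/-- Partial derivative of `F : ℝ² → ℝ` in the `i`-th coordinate direction. -/
noncomputable def pd (i : Fin 2) (F : V2 → ℝ) : V2 → ℝ :=
  fun x => fderiv ℝ F x (EuclideanSpace.single i 1)

/-- `Σ_{|α| ≤ 2} |∂^α F(x)|²`, the sum over all multi-indices `α` of order at most `2`. -/
noncomputable def c2SqAt (F : V2 → ℝ) (x : V2) : ℝ :=
  (F x) ^ 2 + (pd 0 F x) ^ 2 + (pd 1 F x) ^ 2 +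
    (pd 0 (pd 0 F) x) ^ 2 + (pd 0 (pd 1 F) x) ^ 2 + (pd 1 (pd 1 F) x) ^ 2

/-- `‖F‖_{C²(ℝ²)} := sup_x (Σ_{|α|≤2} |∂^α F(x)|²)^{1/2} ≤ M`. -/
def C2NormLE (F : V2 → ℝ) (M : ℝ) : Prop :=
  ∀ x : V2, Real.sqrt (c2SqAt F x) ≤ M

/-- The 1-jet of `F` at `x`: `𝒥_x F (y) = F(x) + ∇F(x) · (y − x)`. -/
noncomputable def jet (x : V2) (F : V2 → ℝ) : V2 → ℝ :=
  fun y => F x + fderiv ℝ F x (y - x)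

/-- `Γ₊(x, S, M)`: the 1-jets at `x` of nonnegative `C²` functions `F` with
`‖F‖_{C²(ℝ²)} ≤ M` and `F = f` on `S`. -/
def GammaPlus (f : V2 → ℝ) (x : V2) (S : Finset V2) (M : ℝ) : Set (V2 → ℝ) :=
  {P | ∃ F : V2 → ℝ, ContDiff ℝ 2 F ∧ (∀ y : V2, 0 ≤ F y) ∧ C2NormLE F M ∧
        (∀ y ∈ S, F y = f y) ∧ jet x F = P}

/-- `σ(x, S)`: the 1-jets at `x` of `C²` functions `F` with `‖F‖_{C²(ℝ²)} ≤ 1` and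
`F = 0` on `S`. -/
def sigmaSet (x : V2) (S : Finset V2) : Set (V2 → ℝ) :=
  {P | ∃ F : V2 → ℝ, ContDiff ℝ 2 F ∧ (∀ y ∈ S, F y = 0) ∧ C2NormLE F 1 ∧
        jet x F = P}

/-- `Γ₊^♯(x, k, M) := ⋂_{S ⊆ E, #S ≤ k} Γ₊(x, S, M)`. -/
def GammaPlusSharp (E : Finset V2) (f : V2 → ℝ) (x : V2) (k : ℕ) (M : ℝ) :
    Set (V2 → ℝ) :=
  {P | ∀ S : Finset V2, S ⊆ E → S.card ≤ k → P ∈ GammaPlus f x S M}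

/-- `σ^♯(x, k) := ⋂_{S ⊆ E, #S ≤ k} σ(x, S)`. -/
def sigmaSharp (E : Finset V2) (x : V2) (k : ℕ) : Set (V2 → ℝ) :=
  {P | ∀ S : Finset V2, S ⊆ E → S.card ≤ k → P ∈ sigmaSet x S}

/-- A (half-open) axis-parallel square `[s, s+len) × [t, t+len)` in `ℝ²`. -/
structure Sq where
  s : ℝ
  t : ℝ
  len : ℝ

/-- The square `Q` itself, as a subset of `ℝ²`. -/
def Sq.carrier (Q : Sq) : Set V2 :=
  {p : V2 | Q.s ≤ p 0 ∧ p 0 < Q.s + Q.len ∧ Q.t ≤ p 1 ∧ p 1 < Q.t + Q.len}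

/-- `Q* := 2Q`, the concentric double of `Q`. -/
def Sq.double (Q : Sq) : Set V2 :=
  {p : V2 | Q.s - Q.len / 2 ≤ p 0 ∧ p 0 < Q.s + 3 * Q.len / 2 ∧
            Q.t - Q.len / 2 ≤ p 1 ∧ p 1 < Q.t + 3 * Q.len / 2}

/-- The dyadic parent `Q⁺` of `Q`: the square of side `2·len` from the coarser dyadic
grid that contains `Q`. -/
noncomputable def Sq.parent (Q : Sq) : Sq :=
  ⟨2 * Q.len * (⌊Q.s / (2 * Q.len)⌋ : ℝ), 2 * Q.len * (⌊Q.t / (2 * Q.len)⌋ : ℝ),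
    2 * Q.len⟩

/-- `Q` is a dyadic square (obtained by repeated bisection of unit lattice squares):
its side length is `2^{-m}` and its corner coordinates are integer multiples of it. -/
def Sq.IsDyadic (Q : Sq) : Prop :=
  (∃ m : ℕ, Q.len = (2 : ℝ) ^ (-(m : ℤ))) ∧
    ∃ a b : ℤ, Q.s = (a : ℝ) * Q.len ∧ Q.t = (b : ℝ) * Q.len

/-- `diam(σ^♯(x, k))`: the Euclidean diameter of `σ^♯(x, k)` under the identification
`P ↦ (∂₁P(x), ∂₂P(x), P(x))` of affine polynomials with `ℝ³`. -/
noncomputable def sigmaSharpDiam (E : Finset V2) (x : V2) (k : ℕ) : ℝ :=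
  ⨆ P ∈ sigmaSharp E x k, ⨆ P' ∈ sigmaSharp E x k,
    Real.sqrt ((pd 0 P x - pd 0 P' x) ^ 2 + (pd 1 P x - pd 1 P' x) ^ 2 +
      (P x - P' x) ^ 2)

open EuclideanSpace in
theorem eq_smul_single_add_smul_single (v : V2) : v = v 0 • single 0 1 + v 1 • single 1 1 := by
  ext i; fin_cases i <;> simp

open EuclideanSpace in
theorem norm_le_abs_add_abs (v : V2) : ‖v‖ ≤ |v 0| + |v 1| := by
  conv_lhs => rw [eq_smul_single_add_smul_single v]
  exact (norm_add_le _ _).trans_eq (by simp [norm_smul])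

open EuclideanSpace in
theorem opNorm_le_abs_add_abs (L : V2 →L[ℝ] ℝ) :
    ‖L‖ ≤ |L (single 0 1)| + |L (single 1 1)| := by
  refine L.opNorm_le_bound (by positivity) fun v => ?_
  have hv : L v = v 0 * L (single 0 1) + v 1 * L (single 1 1) := by
    conv_lhs => rw [eq_smul_single_add_smul_single v]
    simp
  rw [hv, Real.norm_eq_abs]
  calc |v 0 * L (single 0 1) + v 1 * L (single 1 1)|
      ≤ |v 0| * |L (single 0 1)| + |v 1| * |L (single 1 1)| := by
        rw [← abs_mul, ← abs_mul]; exact abs_add_le _ _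
    _ ≤ ‖v‖ * |L (single 0 1)| + ‖v‖ * |L (single 1 1)| := by
        gcongr <;> simpa using PiLp.norm_apply_le v _
    _ = _ := by ring

theorem abs_pd_le_norm_fderiv (F : V2 → ℝ) (i : Fin 2) (x : V2) :
    |pd i F x| ≤ ‖fderiv ℝ F x‖ := by
  simpa [pd] using (fderiv ℝ F x).le_opNorm (EuclideanSpace.single i 1)

theorem contDiff_pd {n : WithTop ℕ∞} {F : V2 → ℝ} (hF : ContDiff ℝ (n + 1) F) (i : Fin 2) :
    ContDiff ℝ n (pd i F) :=
  (hF.fderiv_right le_rfl).clm_apply contDiff_const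

theorem pd_pd_comm {F : V2 → ℝ} (hF : ContDiff ℝ 2 F) (i j : Fin 2) (x : V2) :
    pd i (pd j F) x = pd j (pd i F) x := by
  have hF' : Differentiable ℝ (fderiv ℝ F) :=
    (hF.fderiv_right (m := 1) (by norm_num)).differentiable one_ne_zero
  have h (p q : Fin 2) : pd p (pd q F) x =
      fderiv ℝ (fderiv ℝ F) x (EuclideanSpace.single p 1) (EuclideanSpace.single q 1) := by
    change fderiv ℝ (fun y => fderiv ℝ F y (EuclideanSpace.single q 1)) x _ = _
    simp [fderiv_clm_apply (hF' x) (differentiableAt_const _)]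
  rw [h, h]
  exact hF.contDiffAt.isSymmSndFDerivAt (by simp) _ _

namespace C2NormLE

variable {F : V2 → ℝ} {M : ℝ}

theorem abs_apply_le (h : C2NormLE F M) (x : V2) : |F x| ≤ M :=
  (Real.abs_le_sqrt (by unfold c2SqAt; nlinarith)).trans (h x)

theorem abs_pd_le (h : C2NormLE F M) (i : Fin 2) (x : V2) : |pd i F x| ≤ M := by
  refine (Real.abs_le_sqrt ?_).trans (h x)
  fin_cases i <;> (simp only [c2SqAt]; dsimp; nlinarith)

theorem abs_pd_pd_le (hF : ContDiff ℝ 2 F) (h : C2NormLE F M) (i j : Fin 2) (x : V2) :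
    |pd i (pd j F) x| ≤ M := by
  have h10 := pd_pd_comm hF 1 0 x
  refine (Real.abs_le_sqrt ?_).trans (h x)
  fin_cases i <;> fin_cases j <;> (simp only [c2SqAt]; dsimp; (try rw [h10]); nlinarith)

theorem abs_pd_sub_le (hF : ContDiff ℝ 2 F) (h : C2NormLE F M) (j : Fin 2) (a b : V2) :
    |pd j F b - pd j F a| ≤ 2 * M * ‖b - a‖ := by
  have hd : Differentiable ℝ (pd j F) := (contDiff_pd (n := 1) hF j).differentiable one_ne_zero
  have hbound (z : V2) : ‖fderiv ℝ (pd j F) z‖ ≤ 2 * M :=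
    (opNorm_le_abs_add_abs _).trans <| show |pd 0 (pd j F) z| + |pd 1 (pd j F) z| ≤ 2 * M by
      linarith [abs_pd_pd_le hF h 0 j z, abs_pd_pd_le hF h 1 j z]
  simpa using convex_univ.norm_image_sub_le_of_norm_fderiv_le (fun z _ => hd z)
    (fun z _ => hbound z) (Set.mem_univ a) (Set.mem_univ b)

theorem norm_fderiv_sub_le (hF : ContDiff ℝ 2 F) (h : C2NormLE F M) (a b : V2) :
    ‖fderiv ℝ F b - fderiv ℝ F a‖ ≤ 4 * M * ‖b - a‖ :=
  (opNorm_le_abs_add_abs _).trans <|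
    show |pd 0 F b - pd 0 F a| + |pd 1 F b - pd 1 F a| ≤ 4 * M * ‖b - a‖ by
      linarith [abs_pd_sub_le hF h 0 a b, abs_pd_sub_le hF h 1 a b]

theorem abs_sub_sub_fderiv_le (hF : ContDiff ℝ 2 F) (h : C2NormLE F M) (a b : V2) :
    |F b - F a - fderiv ℝ F a (b - a)| ≤ 4 * M * ‖b - a‖ ^ 2 := by
  have hbound : ∀ z ∈ Metric.closedBall a ‖b - a‖,
      ‖fderiv ℝ F z - fderiv ℝ F a‖ ≤ 4 * M * ‖b - a‖ := fun z hz => by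
    have hM : 0 ≤ M := (abs_nonneg _).trans (h.abs_apply_le a)
    refine (norm_fderiv_sub_le hF h a z).trans ?_
    gcongr
    simpa [dist_eq_norm] using hz
  have := (convex_closedBall a ‖b - a‖).norm_image_sub_le_of_norm_fderiv_le'
    (fun z _ => (hF.differentiable two_ne_zero) z) hbound
    (Metric.mem_closedBall_self (norm_nonneg _)) (Metric.mem_closedBall.2 (dist_eq_norm b a).le)
  rw [Real.norm_eq_abs] at this
  linarith

end C2NormLE

theorem pd_smul_add_smul {F G : V2 → ℝ} (hF : Differentiable ℝ F) (hG : Differentiable ℝ G)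
    (a b : ℝ) (i : Fin 2) : pd i (a • F + b • G) = a • pd i F + b • pd i G := by
  funext z
  simp [pd, fderiv_add ((hF z).const_smul a) ((hG z).const_smul b),
    fderiv_const_smul (hF z), fderiv_const_smul (hG z)]

def c2Vec (F : V2 → ℝ) (x : V2) : EuclideanSpace ℝ (Fin 6) :=
  !₂[F x, pd 0 F x, pd 1 F x, pd 0 (pd 0 F) x, pd 0 (pd 1 F) x, pd 1 (pd 1 F) x]

theorem norm_c2Vec (F : V2 → ℝ) (x : V2) : ‖c2Vec F x‖ = √(c2SqAt F x) := by
  simp [EuclideanSpace.norm_eq, c2Vec, c2SqAt, Fin.sum_univ_succ, add_assoc]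

theorem c2Vec_smul_add_smul {F G : V2 → ℝ} (hF : ContDiff ℝ 2 F) (hG : ContDiff ℝ 2 G)
    (a b : ℝ) (x : V2) : c2Vec (a • F + b • G) x = a • c2Vec F x + b • c2Vec G x := by
  have h1 := pd_smul_add_smul (hF.differentiable two_ne_zero) (hG.differentiable two_ne_zero) a b
  have h2 (i j : Fin 2) := pd_smul_add_smul ((contDiff_pd (n := 1) hF j).differentiable one_ne_zero)
    ((contDiff_pd (n := 1) hG j).differentiable one_ne_zero) a b i
  ext i
  fin_cases i <;> simp [c2Vec, h1, h2]

theorem C2NormLE.smul_add_smul {F G : V2 → ℝ} {M a b : ℝ} (hF : ContDiff ℝ 2 F)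
    (hG : ContDiff ℝ 2 G) (hFM : C2NormLE F M) (hGM : C2NormLE G M) (ha : 0 ≤ a) (hb : 0 ≤ b)
    (hab : a + b = 1) : C2NormLE (a • F + b • G) M := by
  intro x
  rw [← norm_c2Vec, c2Vec_smul_add_smul hF hG]
  have hFx := (norm_c2Vec F x).trans_le (hFM x)
  have hGx := (norm_c2Vec G x).trans_le (hGM x)
  calc ‖a • c2Vec F x + b • c2Vec G x‖ ≤ a * ‖c2Vec F x‖ + b * ‖c2Vec G x‖ := by
        refine (norm_add_le _ _).trans_eq ?_
        rw [norm_smul, norm_smul, Real.norm_of_nonneg ha, Real.norm_of_nonneg hb]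
    _ ≤ a * M + b * M := by gcongr
    _ = M := by rw [← add_mul, hab, one_mul]

theorem fderiv_jet (x : V2) (F : V2 → ℝ) (z : V2) : fderiv ℝ (jet x F) z = fderiv ℝ F x := by
  have : jet x F = fun y => (F x - fderiv ℝ F x x) + fderiv ℝ F x y := by
    funext y; simp only [jet, map_sub]; ring
  rw [this, fderiv_const_add, ContinuousLinearMap.fderiv]

@[simp]
theorem jet_self (x : V2) (F : V2 → ℝ) : jet x F x = F x := by simp [jet]

@[simp]
theorem pd_jet (x : V2) (F : V2 → ℝ) (i : Fin 2) (z : V2) : pd i (jet x F) z = pd i F x := by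
  simp only [pd, fderiv_jet]

theorem jet_smul_add_smul {x : V2} {F G : V2 → ℝ} (hF : DifferentiableAt ℝ F x)
    (hG : DifferentiableAt ℝ G x) (a b : ℝ) :
    jet x (a • F + b • G) = a • jet x F + b • jet x G := by
  funext y
  simp [jet, fderiv_add (hF.const_smul a) (hG.const_smul b), fderiv_const_smul hF,
    fderiv_const_smul hG]
  ring

theorem jet_eq_of_eq_zero {x : V2} {F : V2 → ℝ} (h : F x = 0) :
    jet x F = fun y => fderiv ℝ F x (y - x) := by
  funext y; simp only [jet, h, zero_add]

theorem convex_sigmaSet (x : V2) (S : Finset V2) : Convex ℝ (sigmaSet x S) := by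
  rintro _ ⟨F, hF, hFS, hFM, rfl⟩ _ ⟨G, hG, hGS, hGM, rfl⟩ a b ha hb hab
  refine ⟨a • F + b • G, (hF.const_smul a).add (hG.const_smul b),
    fun y hy => by simp [hFS y hy, hGS y hy], hFM.smul_add_smul hF hG hGM ha hb hab, ?_⟩
  exact jet_smul_add_smul (hF.differentiable two_ne_zero x) (hG.differentiable two_ne_zero x) a b

theorem sigmaSet_anti {x : V2} {S T : Finset V2} (h : S ⊆ T) : sigmaSet x T ⊆ sigmaSet x S :=
  fun _ ⟨F, hF, hFT, hFM, hP⟩ => ⟨F, hF, fun y hy => hFT y (h hy), hFM, hP⟩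

theorem Real.le_biSup_biSup {α : Type*} {S : Set α} {f : α → α → ℝ} {B : ℝ}
    (hB : ∀ a ∈ S, ∀ b ∈ S, f a b ≤ B) (hB₀ : 0 ≤ B) {a b : α} (ha : a ∈ S) (hb : b ∈ S) :
    f a b ≤ ⨆ x ∈ S, ⨆ y ∈ S, f x y := by
  have hinner : ∀ x ∈ S, ⨆ y ∈ S, f x y ≤ B := fun x hx =>
    Real.iSup_le (fun y => Real.iSup_le (hB x hx y) hB₀) hB₀
  calc f a b ≤ ⨆ y ∈ S, f a y := by
        refine le_ciSup₂ (f := fun y (_ : y ∈ S) => f a y) ⟨B, ?_⟩ b hb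
        simp only [upperBounds, Set.mem_iUnion, Set.mem_range]
        rintro _ ⟨y, hy, rfl⟩
        exact hB a ha y hy
    _ ≤ ⨆ x ∈ S, ⨆ y ∈ S, f x y := by
        refine le_ciSup₂ (f := fun x (_ : x ∈ S) => ⨆ y ∈ S, f x y) ⟨B, ?_⟩ a ha
        simp only [upperBounds, Set.mem_iUnion, Set.mem_range]
        rintro _ ⟨x, hx, rfl⟩
        exact hinner x hx

@[simp]
theorem pd_zero (i : Fin 2) : pd i (0 : V2 → ℝ) = 0 := by
  funext; simp [pd]

theorem zero_mem_sigmaSharp (E : Finset V2) (x : V2) (k : ℕ) : 0 ∈ sigmaSharp E x k := by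
  refine fun S _ _ => ⟨0, contDiff_const, fun _ _ => rfl, fun y => ?_, ?_⟩
  · simp [c2SqAt]
  · funext; simp [jet]

section SigmaSharp

variable {E : Finset V2} {k : ℕ} {x y : V2} {P : V2 → ℝ}

theorem abs_le_one_of_mem_sigmaSharp (hP : P ∈ sigmaSharp E x k) :
    |P x| ≤ 1 ∧ ∀ i, |pd i P x| ≤ 1 := by
  obtain ⟨F, -, -, hFM, rfl⟩ := hP ∅ (Finset.empty_subset E) (by simp)
  exact ⟨by simpa using hFM.abs_apply_le x, fun i => by simpa using hFM.abs_pd_le i x⟩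

theorem le_sigmaSharpDiam {P' : V2 → ℝ} (hP : P ∈ sigmaSharp E x k)
    (hP' : P' ∈ sigmaSharp E x k) :
    √((pd 0 P x - pd 0 P' x) ^ 2 + (pd 1 P x - pd 1 P' x) ^ 2 + (P x - P' x) ^ 2) ≤
      sigmaSharpDiam E x k := by
  -- `⨆` over an unbounded family of reals is the junk value `0`; the `C²` bound
  -- confines `σ♯(x, k)` to the unit cube, so the pairwise distances are at most `√12`.
  have hsq {a b : ℝ} (ha : |a| ≤ 1) (hb : |b| ≤ 1) : (a - b) ^ 2 ≤ 4 := by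
    rw [abs_le] at ha hb; nlinarith
  refine Real.le_biSup_biSup (S := sigmaSharp E x k) (B := √12)
    (f := fun Q Q' =>
      √((pd 0 Q x - pd 0 Q' x) ^ 2 + (pd 1 Q x - pd 1 Q' x) ^ 2 + (Q x - Q' x) ^ 2))
    (fun Q hQ Q' hQ' => Real.sqrt_le_sqrt ?_) (by positivity) hP hP'
  obtain ⟨hQ₀, hQ₁⟩ := abs_le_one_of_mem_sigmaSharp hQ
  obtain ⟨hQ'₀, hQ'₁⟩ := abs_le_one_of_mem_sigmaSharp hQ'
  linarith [hsq (hQ₁ 0) (hQ'₁ 0), hsq (hQ₁ 1) (hQ'₁ 1), hsq hQ₀ hQ'₀]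

theorem norm_le_two_mul_sigmaSharpDiam {L : V2 →L[ℝ] ℝ}
    (hL : (fun y => L (y - x)) ∈ sigmaSharp E x k) : ‖L‖ ≤ 2 * sigmaSharpDiam E x k := by
  have hpd (i : Fin 2) : pd i (fun y => L (y - x)) x = L (EuclideanSpace.single i 1) := by
    simp [pd, fderiv_sub_const]
  have hdiam := le_sigmaSharpDiam hL (zero_mem_sigmaSharp E x k)
  simp only [hpd, pd_zero, Pi.zero_apply, sub_zero, sub_self, map_zero] at hdiam
  set a := L (EuclideanSpace.single 0 1)
  set b := L (EuclideanSpace.single 1 1)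
  have ha : |a| ≤ √(a ^ 2 + b ^ 2 + 0 ^ 2) := Real.abs_le_sqrt (by nlinarith)
  have hb : |b| ≤ √(a ^ 2 + b ^ 2 + 0 ^ 2) := Real.abs_le_sqrt (by nlinarith)
  linarith [opNorm_le_abs_add_abs L]

theorem finrank_dual_V2 : Module.finrank ℝ (V2 →L[ℝ] ℝ) = 2 := by
  rw [← (LinearMap.toContinuousLinearMap : (V2 →ₗ[ℝ] ℝ) ≃ₗ[ℝ] _).finrank_eq]
  simp

open Finset in
theorem exists_mem_sigmaSharp_near (hk : 1 ≤ k) (hy : y ∈ E) (hP : P ∈ sigmaSharp E x (4 * k)) :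
    ∃ L : V2 →L[ℝ] ℝ, (fun z => L (z - y)) ∈ sigmaSharp E y k ∧
      ‖L - fderiv ℝ P x‖ ≤ 4 * ‖y - x‖ := by
  classical
  set s := E.powerset.filter (·.card ≤ k)
  set B : Finset V2 → Set (V2 →L[ℝ] ℝ) := fun T =>
    (fun L z => L (z - y)) ⁻¹' sigmaSet y (insert y T) ∩
      Metric.closedBall (fderiv ℝ P x) (4 * ‖y - x‖)
  have hconv : ∀ T ∈ s, Convex ℝ (B T) := fun T _ =>
    ((convex_sigmaSet y _).is_linear_preimage ⟨fun _ _ => rfl, fun _ _ => rfl⟩).inter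
      (convex_closedBall _ _)
  have hinter : ∀ I ⊆ s, #I ≤ Module.finrank ℝ (V2 →L[ℝ] ℝ) + 1 → (⋂ T ∈ I, B T).Nonempty := by
    intro I hIs hI
    rw [finrank_dual_V2] at hI
    have hIE : ∀ T ∈ I, T ⊆ E ∧ #T ≤ k := fun T hT => by simpa [s] using hIs hT
    set U := insert y (I.biUnion id)
    have hUE : U ⊆ E := insert_subset hy (biUnion_subset.2 fun T hT => (hIE T hT).1)
    have hUk : #U ≤ 4 * k := calc
      #U ≤ #(I.biUnion id) + 1 := card_insert_le _ _
      _ ≤ #I * k + 1 := by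
        gcongr
        exact card_biUnion_le.trans (sum_le_card_nsmul _ _ _ fun T hT => (hIE T hT).2)
      _ ≤ 4 * k := by nlinarith
    obtain ⟨F, hF, hFU, hFM, rfl⟩ := hP U hUE hUk
    refine ⟨fderiv ℝ F y, Set.mem_iInter₂.2 fun T hT => ⟨?_, ?_⟩⟩
    · change (fun z => fderiv ℝ F y (z - y)) ∈ sigmaSet y (insert y T)
      rw [← jet_eq_of_eq_zero (hFU y (mem_insert_self _ _))]
      exact ⟨F, hF, fun z hz => hFU z (insert_subset_insert _ (subset_biUnion_of_mem id hT) hz),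
        hFM, rfl⟩
    · rw [Metric.mem_closedBall, dist_eq_norm, fderiv_jet]
      simpa using hFM.norm_fderiv_sub_le hF x y
  obtain ⟨L, hL⟩ := Convex.helly_theorem' hconv hinter
  rw [Set.mem_iInter₂] at hL
  refine ⟨L, fun T hTE hTk => sigmaSet_anti (subset_insert _ _) (hL T ?_).1, ?_⟩
  · simpa [s] using ⟨hTE, hTk⟩
  · simpa [dist_eq_norm] using (hL ∅ (by simp [s])).2

theorem norm_fderiv_le_of_mem_sigmaSharp (hk : 1 ≤ k) (hy : y ∈ E)
    (hP : P ∈ sigmaSharp E x (4 * k)) :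
    ‖fderiv ℝ P x‖ ≤ 2 * sigmaSharpDiam E y k + 4 * ‖y - x‖ := by
  obtain ⟨L, hL, hLP⟩ := exists_mem_sigmaSharp_near hk hy hP
  calc ‖fderiv ℝ P x‖ ≤ ‖L‖ + ‖L - fderiv ℝ P x‖ := norm_le_norm_add_norm_sub _ _
    _ ≤ 2 * sigmaSharpDiam E y k + 4 * ‖y - x‖ :=
      add_le_add (norm_le_two_mul_sigmaSharpDiam hL) hLP

theorem abs_apply_le_of_mem_sigmaSharp (hk : 1 ≤ k) (hy : y ∈ E) (hP : P ∈ sigmaSharp E x k) :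
    |P x| ≤ ‖fderiv ℝ P x‖ * ‖y - x‖ + 4 * ‖y - x‖ ^ 2 := by
  obtain ⟨F, hF, hFy, hFM, rfl⟩ := hP {y} (by simpa using hy) (by simpa using hk)
  have htaylor := hFM.abs_sub_sub_fderiv_le hF x y
  rw [hFy y (Finset.mem_singleton_self y), mul_one, zero_sub] at htaylor
  have hlin := (fderiv ℝ F x).le_opNorm (y - x)
  rw [Real.norm_eq_abs] at hlin
  rw [jet_self, fderiv_jet]
  calc |F x| ≤ |-F x - fderiv ℝ F x (y - x)| + |fderiv ℝ F x (y - x)| := by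
        simpa using abs_add_le (-F x - fderiv ℝ F x (y - x)) (fderiv ℝ F x (y - x))
    _ ≤ _ := by linarith

end SigmaSharp

theorem abs_sub_le_of_mem_parent_double {l s u v : ℝ} (hl : 0 < l) (hu₁ : s ≤ u)
    (hu₂ : u < s + l) (hv₁ : 2 * l * ⌊s / (2 * l)⌋ - 2 * l / 2 ≤ v)
    (hv₂ : v < 2 * l * ⌊s / (2 * l)⌋ + 3 * (2 * l) / 2) : |u - v| ≤ 4 * l := by
  have h₁ := (le_div_iff₀ (by positivity)).1 (Int.floor_le (s / (2 * l)))
  have h₂ := (div_lt_iff₀ (by positivity)).1 (Int.lt_floor_add_one (s / (2 * l)))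
  rw [abs_le]
  constructor <;> nlinarith

theorem Sq.norm_sub_le_of_mem_parent_double {Q : Sq} (hQ : 0 < Q.len) {x y : V2}
    (hx : x ∈ Q.carrier) (hy : y ∈ Q.parent.double) : ‖y - x‖ ≤ 8 * Q.len := by
  obtain ⟨hx₀, hx₀', hx₁, hx₁'⟩ := hx
  obtain ⟨hy₀, hy₀', hy₁, hy₁'⟩ := hy
  have h₀ := abs_sub_le_of_mem_parent_double hQ hx₀ hx₀' hy₀ hy₀'
  have h₁ := abs_sub_le_of_mem_parent_double hQ hx₁ hx₁' hy₁ hy₁'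
  calc ‖y - x‖ ≤ |(y - x) 0| + |(y - x) 1| := norm_le_abs_add_abs _
    _ ≤ 8 * Q.len := by
      rw [PiLp.sub_apply, PiLp.sub_apply, abs_sub_comm (y 0), abs_sub_comm (y 1)]
      linarith

/-- **Lemma 5.7.** Let `Q` be a dyadic square of side `≤ 1` such that either `δ_Q = 1` or
some `ŷ ∈ E ∩ (Q⁺)*` has `diam(σ^♯(ŷ, k)) < 2·C_nice·δ_Q`, and let `x^♯ ∈ Q` be at
distance at least `c_rep·δ_Q` from `E`.  Then `σ^♯(x^♯, 4k) ⊆ C·ℬ(x^♯, δ_Q)` for a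
constant `C` depending only on `C_nice` and `c_rep`, i.e. every `P ∈ σ^♯(x^♯, 4k)`
satisfies `|∂^α P(x^♯)| ≤ C·δ_Q^{2−|α|}` for `|α| ≤ 1`. -/
theorem sigmaSharp_subset_ball :
    ∀ Cnice crep : ℝ, 1 ≤ Cnice → 0 < crep →
      ∃ C : ℝ, 0 < C ∧
        ∀ (E : Finset V2) (k : ℕ) (Q : Sq) (xr : V2),
          1 ≤ k → Q.IsDyadic → Q.len ≤ 1 →
          xr ∈ Q.carrier →
          (∀ y ∈ E, crep * Q.len ≤ dist xr y) →
          (Q.len = 1 ∨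
            ∃ yh ∈ E, (yh : V2) ∈ Q.parent.double ∧
              sigmaSharpDiam E yh k < 2 * Cnice * Q.len) →
          ∀ P ∈ sigmaSharp E xr (4 * k),
            |P xr| ≤ C * Q.len ^ 2 ∧ ∀ i : Fin 2, |pd i P xr| ≤ C * Q.len := by
  intro Cnice _ hCnice _
  refine ⟨32 * Cnice + 512, by positivity, ?_⟩
  intro E k Q xr hk hQ _ hxQ _ hcases P hP
  have hδ : 0 < Q.len := by
    obtain ⟨⟨m, hm⟩, -⟩ := hQ
    rw [hm]; positivity
  rcases hcases with hδ₁ | ⟨yh, hyE, hyQ, hdiam⟩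
  · obtain ⟨hP₀, hP₁⟩ := abs_le_one_of_mem_sigmaSharp hP
    rw [hδ₁, one_pow, mul_one]
    exact ⟨by linarith, fun i => by linarith [hP₁ i]⟩
  have hR : ‖yh - xr‖ ≤ 8 * Q.len := Q.norm_sub_le_of_mem_parent_double hδ hxQ hyQ
  have hgrad : ‖fderiv ℝ P xr‖ ≤ (4 * Cnice + 32) * Q.len := by
    linarith [norm_fderiv_le_of_mem_sigmaSharp hk hyE hP]
  refine ⟨?_, fun i => (abs_pd_le_norm_fderiv P i xr).trans (hgrad.trans (by nlinarith))⟩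
  calc |P xr| ≤ ‖fderiv ℝ P xr‖ * ‖yh - xr‖ + 4 * ‖yh - xr‖ ^ 2 :=
        abs_apply_le_of_mem_sigmaSharp (by omega) hyE hP
    _ ≤ (4 * Cnice + 32) * Q.len * (8 * Q.len) + 4 * (8 * Q.len) ^ 2 := by gcongr
    _ = (32 * Cnice + 512) * Q.len ^ 2 := by ring
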